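/- Correctness of asynchronous R_z injection, case ZZ = 0, outcome +: starting from ψ = α|0⟩ + β|1⟩ on the data qubit and |+⟩ on the ancilla, projecting onto the ZZ = +1 eigenspace, applying R_z(θ) to the ancilla, and then projecting the ancilla onto |+⟩ and discarding it, yields (up to a nonzero scalar) the state α|0⟩ + e^{iθ}β|1⟩ = R_z(θ)ψ. -/

import Mathlib

open Complex

noncomputable def plusV : Fin 2 → ℂ := fun _ => 1 / Real.sqrt 2

/-- `ψ = α|0⟩ + β|1⟩`. -/
def psi (a b : ℂ) : Fin 2 → ℂ := fun i => if i = 0 then a else b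

/-- Data qubit in `ψ`, ancilla in `|+⟩`. -/
noncomputable def init (a b : ℂ) : Fin 2 × Fin 2 → ℂ := fun p => psi a b p.1 * plusV p.2

/-- The `ZZ = +1` projector `|00⟩⟨00| + |11⟩⟨11|`. -/
def P0 (v : Fin 2 × Fin 2 → ℂ) : Fin 2 × Fin 2 → ℂ :=
  fun p => if p.1 = p.2 then v p else 0

/-- `R_z(θ)` applied to the ancilla: `id ⊗ diag(1, e^{iθ})`. -/
noncomputable def rzAncilla (θ : ℝ) (v : Fin 2 × Fin 2 → ℂ) : Fin 2 × Fin 2 → ℂ :=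
  fun p => (if p.2 = 0 then 1 else Complex.exp (θ * Complex.I)) * v p

/-- Project the ancilla onto `|+⟩` and discard it: `(id ⊗ ⟨+|)`. -/
noncomputable def projPlus (v : Fin 2 × Fin 2 → ℂ) : Fin 2 → ℂ :=
  fun i => ∑ j : Fin 2, plusV j * v (i, j)

/-- Asynchronous R_z injection, case `ZZ = 0`, outcome `+`: the result is
`α|0⟩ + e^{iθ}β|1⟩ = R_z(θ)ψ` up to a nonzero scalar. -/
theorem rz_injection_zz0_plus (a b : ℂ) (θ : ℝ) :
    ∃ s : ℂ, s ≠ 0 ∧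
      projPlus (rzAncilla θ (P0 (init a b)))
        = fun i => s * ((if i = 0 then 1 else Complex.exp (θ * Complex.I)) * psi a b i) := by
  refine ⟨1/2, by norm_num, funext fun i => ?_⟩
  have h2 : ((Real.sqrt 2 : ℝ) : ℂ) ≠ 0 := by
    exact_mod_cast Complex.ofReal_ne_zero.mpr (by positivity)
  fin_cases i <;>
    simp [projPlus, rzAncilla, P0, init, psi, plusV, Fin.sum_univ_two] <;>
    field_simp <;> ring_nf <;>
    exact congrArg (_ * ·) (by norm_cast; exact (Real.sq_sqrt (by norm_num)).symm)
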